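/- arXiv:2007.05636 — 5 statements merged into one kernel-verified Lean document; each statement's English description precedes it below -/
import Mathlib

section
/- Suppose the data comes from a single positive peak located exactly at the grid point x_K, i.e. f = γ G(· − x_K) for some K ∈ {1, …, N} and γ > 0, and suppose 0 < λ < γ H(0). Then the vector c* ∈ ℝ^N with c*_K = (γ H(0) − λ)/H(0) and c*_j = 0 for j ≠ K is a minimizer of the Lasso functional J, and its nonzero coefficient satisfies c*_K ∈ (0, γ). In other words, μ^N = c*_K δ_{x_K} is a one-sparse solution supported exactly at the true peak location. (Proposition 2: exact support recovery for on-grid peaks.) -/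
open MeasureTheory

/-- Proposition 2: exact support recovery for on-grid peaks. If the data is
`f = γ G(· − x_K)` with `γ > 0` and `0 < λ < γ H(0)`, then the one-sparse vector
with value `(γ H(0) − λ)/H(0)` at index `K` and zero elsewhere minimizes the Lasso
functional, and this value lies in `(0, γ)`. -/
theorem lasso_exact_recovery_on_grid
    (d N : ℕ) (hN : 1 ≤ N)
    (G : (Fin d → ℝ) → ℝ) (hGm : Measurable G)
    (hGeven : ∀ y, G (-y) = G y)
    (hG2 : MemLp G 2 (volume : Measure (Fin d → ℝ)))
    (x : Fin N → (Fin d → ℝ)) (hx : Function.Injective x)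
    (H : (Fin d → ℝ) → ℝ)
    (hH : ∀ a b : Fin d → ℝ, (∫ y, G (y - a) * G (y - b)) = H (a - b))
    (hH0 : 0 < H 0) (hHmax : ∀ y ≠ 0, H y < H 0)
    (γ lam : ℝ) (hγ : 0 < γ)
    (hlam : 0 < lam) (hlam2 : lam < γ * H 0)
    (K : Fin N)
    (f : (Fin d → ℝ) → ℝ) (hf : ∀ y, f y = γ * G (y - x K))
    (J : (Fin N → ℝ) → ℝ)
    (hJ : ∀ c : Fin N → ℝ,
      J c = (1 / 2) * (∫ y, (∑ k, c k * G (y - x k) - f y) ^ 2)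
        + lam * ∑ k, |c k|) :
    (∀ c : Fin N → ℝ,
        J (fun j => if j = K then (γ * H 0 - lam) / H 0 else 0) ≤ J c) ∧
      0 < (γ * H 0 - lam) / H 0 ∧ (γ * H 0 - lam) / H 0 < γ := by
  have hβpos : 0 < (γ * H 0 - lam) / H 0 := div_pos (by linarith) hH0
  have hβlt : (γ * H 0 - lam) / H 0 < γ := by
    rw [div_lt_iff₀ hH0]; nlinarith
  refine ⟨?_, hβpos, hβlt⟩
  intro c
  -- translates of G are in L²
  have hg : ∀ a : Fin d → ℝ, MemLp (fun y => G (y - a)) 2 volume :=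
    fun a => hG2.comp_measurePreserving (measurePreserving_sub_right volume a)
  -- products of translates are integrable
  have hint : ∀ a b : Fin d → ℝ, Integrable (fun y => G (y - a) * G (y - b)) volume := by
    intro a b
    have h1 : Integrable (fun y => (G (y - a) + G (y - b)) ^ 2) volume := by
      simpa using ((hg a).add (hg b)).integrable_sq
    have h2 := (hg a).integrable_sq
    have h3 := (hg b).integrable_sq
    have h4 := ((h1.sub h2).sub h3).const_mul (1 / 2 : ℝ)
    have heq : (fun y => G (y - a) * G (y - b)) =
        fun y => (1 / 2 : ℝ) * ((G (y - a) + G (y - b)) ^ 2 - G (y - a) ^ 2 - G (y - b) ^ 2) := by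
      funext y; ring
    rw [heq]; exact h4
  -- ∫ G(y-a)² = H 0
  have hdiag : ∀ a : Fin d → ℝ, (∫ y, G (y - a) * G (y - a)) = H 0 := by
    intro a; rw [hH a a, sub_self]
  -- |H(a-b)| ≤ H 0
  have habs : ∀ a b : Fin d → ℝ, |H (a - b)| ≤ H 0 := by
    intro a b
    have hplus : (0 : ℝ) ≤ ∫ y, (G (y - a) + G (y - b)) ^ 2 :=
      integral_nonneg fun y => sq_nonneg _
    have hminus : (0 : ℝ) ≤ ∫ y, (G (y - a) - G (y - b)) ^ 2 :=
      integral_nonneg fun y => sq_nonneg _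
    have hexp1 : (∫ y, (G (y - a) + G (y - b)) ^ 2)
        = (∫ y, G (y - a) * G (y - a)) + 2 * (∫ y, G (y - a) * G (y - b))
          + (∫ y, G (y - b) * G (y - b)) := by
      have : (fun y => (G (y - a) + G (y - b)) ^ 2)
          = fun y => (G (y - a) * G (y - a) + 2 * (G (y - a) * G (y - b)))
            + G (y - b) * G (y - b) := by funext y; ring
      have hI1 : Integrable (fun y => G (y - a) * G (y - a) + 2 * (G (y - a) * G (y - b)))
          volume := (hint a a).add ((hint a b).const_mul 2)
      rw [this, integral_add hI1 (hint b b),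
        integral_add (hint a a) ((hint a b).const_mul 2), integral_const_mul]
    have hexp2 : (∫ y, (G (y - a) - G (y - b)) ^ 2)
        = (∫ y, G (y - a) * G (y - a)) - 2 * (∫ y, G (y - a) * G (y - b))
          + (∫ y, G (y - b) * G (y - b)) := by
      have : (fun y => (G (y - a) - G (y - b)) ^ 2)
          = fun y => (G (y - a) * G (y - a) - 2 * (G (y - a) * G (y - b)))
            + G (y - b) * G (y - b) := by funext y; ring
      have hI2 : Integrable (fun y => G (y - a) * G (y - a) - 2 * (G (y - a) * G (y - b)))
          volume := (hint a a).sub ((hint a b).const_mul 2)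
      rw [this, integral_add hI2 (hint b b),
        integral_sub (hint a a) ((hint a b).const_mul 2), integral_const_mul]
    rw [hexp1, hdiag, hdiag, hH] at hplus
    rw [hexp2, hdiag, hdiag, hH] at hminus
    rw [abs_le]; constructor <;> linarith
  -- H is symmetric in the sense H (a - b) = H (b - a)
  have hsymm : ∀ a b : Fin d → ℝ, H (a - b) = H (b - a) := by
    intro a b
    rw [← hH a b, ← hH b a]
    exact integral_congr_ae (Filter.Eventually.of_forall fun y => mul_comm _ _)
  -- bilinear expansion of the quadratic part
  have hB : ∀ w w' : Fin N → ℝ,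
      (∫ y, (∑ k, w k * G (y - x k)) * (∑ j, w' j * G (y - x j)))
        = ∑ k, ∑ j, w k * w' j * H (x k - x j) := by
    intro w w'
    have hpt : ∀ y : Fin d → ℝ, (∑ k, w k * G (y - x k)) * (∑ j, w' j * G (y - x j))
        = ∑ k, ∑ j, w k * w' j * (G (y - x k) * G (y - x j)) := by
      intro y
      rw [Finset.sum_mul_sum]
      refine Finset.sum_congr rfl fun k _ => Finset.sum_congr rfl fun j _ => by ring
    simp_rw [hpt]
    rw [integral_finset_sum _ (fun k _ => integrable_finset_sum _
      (fun j _ => (hint (x k) (x j)).const_mul _))]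
    refine Finset.sum_congr rfl fun k _ => ?_
    rw [integral_finset_sum _ (fun j _ => (hint (x k) (x j)).const_mul _)]
    refine Finset.sum_congr rfl fun j _ => ?_
    rw [integral_const_mul, hH]
  -- residual rewriting: for any c, the residual is A(r c) with r c k = c k - γ·[k=K]
  have hres : ∀ b : Fin N → ℝ,
      (∫ y, (∑ k, b k * G (y - x k) - f y) ^ 2)
        = ∑ k, ∑ j, (b k - if k = K then γ else 0) * (b j - if j = K then γ else 0)
            * H (x k - x j) := by
    intro b
    have hpt : ∀ y : Fin d → ℝ, (∑ k, b k * G (y - x k) - f y) ^ 2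
        = (∑ k, (b k - if k = K then γ else 0) * G (y - x k))
          * (∑ j, (b j - if j = K then γ else 0) * G (y - x j)) := by
      intro y
      have : (∑ k, b k * G (y - x k) - f y)
          = ∑ k, (b k - if k = K then γ else 0) * G (y - x k) := by
        rw [hf]
        rw [Finset.sum_congr rfl (fun k _ => by
          rw [sub_mul] : ∀ k ∈ Finset.univ, (b k - if k = K then γ else 0) * G (y - x k)
            = b k * G (y - x k) - (if k = K then γ else 0) * G (y - x k))]
        rw [Finset.sum_sub_distrib]
        congr 1
        rw [Finset.sum_congr rfl (fun k _ => by
          rw [ite_mul, zero_mul] : ∀ k ∈ Finset.univ, (if k = K then γ else 0) * G (y - x k)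
            = if k = K then γ * G (y - x k) else 0)]
        simp
      rw [this, sq]
    simp_rw [hpt]
    exact hB _ _
  -- now pure algebra
  set cs : Fin N → ℝ := fun j => if j = K then (γ * H 0 - lam) / H 0 else 0 with hcs
  rw [hJ c, hJ cs, hres c, hres cs]
  -- abbreviations
  set r : (Fin N → ℝ) → Fin N → ℝ := fun b k => b k - if k = K then γ else 0 with hr
  have hrcs : ∀ k, r cs k = if k = K then -(lam / H 0) else 0 := by
    intro k
    by_cases hk : k = K
    · show cs k - (if k = K then γ else 0) = _
      rw [if_pos hk, if_pos hk]
      show (if k = K then (γ * H 0 - lam) / H 0 else 0) - γ = _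
      rw [if_pos hk]
      field_simp
      ring
    · show cs k - (if k = K then γ else 0) = _
      rw [if_neg hk, if_neg hk]
      show (if k = K then (γ * H 0 - lam) / H 0 else 0) - 0 = 0
      rw [if_neg hk, sub_zero]
  set u : Fin N → ℝ := fun k => c k - cs k with hu
  have hrc : ∀ k, r c k = u k + r cs k := by
    intro k
    show c k - (if k = K then γ else 0) = (c k - cs k) + (cs k - (if k = K then γ else 0))
    ring
  -- the quadratic form at cs
  have hQcs : (∑ k, ∑ j, r cs k * r cs j * H (x k - x j)) = (lam / H 0) ^ 2 * H 0 := by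
    rw [Finset.sum_eq_single K]
    · rw [Finset.sum_eq_single K]
      · rw [hrcs K, if_pos rfl, sub_self]; ring
      · intro j _ hj; rw [hrcs j, if_neg hj]; ring
      · intro h; exact absurd (Finset.mem_univ K) h
    · intro k _ hk
      rw [Finset.sum_eq_single K]
      · rw [hrcs k, if_neg hk]; ring
      · intro j _ hj; rw [hrcs j, if_neg hj]; ring
      · intro h; exact absurd (Finset.mem_univ K) h
    · intro h; exact absurd (Finset.mem_univ K) h
  -- expand the quadratic form at r c = u + r cs
  have hexp : (∑ k, ∑ j, r c k * r c j * H (x k - x j))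
      = (∑ k, ∑ j, u k * u j * H (x k - x j))
        + (2 * ∑ k, u k * (-(lam / H 0)) * H (x k - x K))
        + (lam / H 0) ^ 2 * H 0 := by
    have expand : ∀ k j, r c k * r c j * H (x k - x j)
        = u k * u j * H (x k - x j) + u k * r cs j * H (x k - x j)
          + r cs k * u j * H (x k - x j) + r cs k * r cs j * H (x k - x j) := by
      intro k j; rw [hrc k, hrc j]; ring
    simp_rw [expand, Finset.sum_add_distrib]
    have t2 : (∑ k, ∑ j, u k * r cs j * H (x k - x j))
        = ∑ k, u k * (-(lam / H 0)) * H (x k - x K) := by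
      refine Finset.sum_congr rfl fun k _ => ?_
      rw [Finset.sum_eq_single K]
      · rw [hrcs K, if_pos rfl]
      · intro j _ hj; rw [hrcs j, if_neg hj]; ring
      · intro h; exact absurd (Finset.mem_univ K) h
    have t3 : (∑ k, ∑ j, r cs k * u j * H (x k - x j))
        = ∑ k, u k * (-(lam / H 0)) * H (x k - x K) := by
      rw [Finset.sum_comm]
      refine Finset.sum_congr rfl fun j _ => ?_
      rw [Finset.sum_eq_single K]
      · rw [hrcs K, if_pos rfl, hsymm (x K) (x j)]; ring
      · intro k _ hk; rw [hrcs k, if_neg hk]; ring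
      · intro h; exact absurd (Finset.mem_univ K) h
    rw [t2, t3, hQcs]; ring
  rw [hexp, hQcs]
  -- the pure quadratic term is nonnegative
  have hQu : (0 : ℝ) ≤ ∑ k, ∑ j, u k * u j * H (x k - x j) := by
    rw [← hB u u]
    exact integral_nonneg fun y => mul_self_nonneg _
  -- ℓ¹ norm of cs
  have habs1 : (∑ k, |cs k|) = (γ * H 0 - lam) / H 0 := by
    rw [Finset.sum_eq_single K]
    · simp [hcs, abs_of_pos hβpos]
    · intro j _ hj; simp [hcs, hj]
    · simp
  rw [habs1]
  -- reduce to a per-index inequality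
  have key : (0 : ℝ) ≤ (1 / 2) * (∑ k, ∑ j, u k * u j * H (x k - x j))
      + ∑ k, (u k * (-(lam / H 0)) * H (x k - x K) + lam * (|c k| - |cs k|)) := by
    have hterm : ∀ k, (0 : ℝ) ≤ u k * (-(lam / H 0)) * H (x k - x K) + lam * (|c k| - |cs k|) := by
      intro k
      by_cases hk : k = K
      · subst hk
        have hcsK : cs k = (γ * H 0 - lam) / H 0 := by simp [hcs]
        have huk : u k = c k - (γ * H 0 - lam) / H 0 := by simp [hu, hcsK]
        have hHkk : H (x k - x k) = H 0 := by rw [sub_self]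
        rw [hHkk, huk, hcsK, abs_of_pos hβpos]
        have h1 : c k ≤ |c k| := le_abs_self _
        have h4 : (c k - (γ * H 0 - lam) / H 0) * -(lam / H 0) * H 0
            = lam * ((γ * H 0 - lam) / H 0) - lam * c k := by
          field_simp
          ring
        have h5 : 0 ≤ lam * (|c k| - c k) := mul_nonneg hlam.le (by linarith)
        nlinarith [h4, h5]
      · have hcsk : cs k = 0 := by simp [hcs, hk]
        have huk : u k = c k := by simp [hu, hcsk]
        rw [huk, hcsk, abs_zero]
        have h1 : c k * H (x k - x K) ≤ |c k| * H 0 := by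
          calc c k * H (x k - x K) ≤ |c k * H (x k - x K)| := le_abs_self _
            _ = |c k| * |H (x k - x K)| := abs_mul _ _
            _ ≤ |c k| * H 0 := by
                exact mul_le_mul_of_nonneg_left (habs (x k) (x K)) (abs_nonneg _)
        have hlamH : 0 ≤ lam / H 0 := le_of_lt (div_pos hlam hH0)
        have h2 : (lam / H 0) * (c k * H (x k - x K)) ≤ (lam / H 0) * (|c k| * H 0) :=
          mul_le_mul_of_nonneg_left h1 hlamH
        have h3 : (lam / H 0) * (|c k| * H 0) = lam * |c k| := by
          field_simp
        have h4 : c k * -(lam / H 0) * H (x k - x K)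
            = -((lam / H 0) * (c k * H (x k - x K))) := by ring
        linarith [h2, h3, h4]
    have := Finset.sum_nonneg (fun k (_ : k ∈ Finset.univ) => hterm k)
    linarith
  have hsplit : (∑ k, (u k * (-(lam / H 0)) * H (x k - x K) + lam * (|c k| - |cs k|)))
      = (∑ k, u k * (-(lam / H 0)) * H (x k - x K)) + lam * ((∑ k, |c k|) - ∑ k, |cs k|) := by
    rw [Finset.sum_add_distrib]
    congr 1
    rw [← Finset.sum_sub_distrib, Finset.mul_sum]
  rw [hsplit, habs1] at key
  linarith
end

section
/- With μ = Σ_{l=1}^L γ_l δ_{ξ_l} and μ^N = Σ_{k=1}^N c_k δ_{x_k} discrete measures, and with q, q^N, r^N defined from the data f as in the context, the following a-posteriori error identity holds: ‖G∗(μ − μ^N)‖²_{L²} + λ ∫ (q − q^N) d(μ − μ^N) = λ ∫ r^N d(μ − μ^N), where G∗(μ − μ^N) is the L² function x ↦ Σ_{l=1}^L γ_l G(x − ξ_l) − Σ_{k=1}^N c_k G(x − x_k), and the integrals against μ − μ^N are the finite sums Σ_l γ_l φ(ξ_l) − Σ_k c_k φ(x_k). (A-posteriori error identity of Section II-C.)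 -/
open MeasureTheory

private lemma sq_integral_sum_shift
    {d : ℕ} {G : (Fin d → ℝ) → ℝ}
    (hG2 : MemLp G 2 (volume : Measure (Fin d → ℝ)))
    {H : (Fin d → ℝ) → ℝ}
    (hH : ∀ a b : Fin d → ℝ, (∫ y, G (y - a) * G (y - b)) = H (a - b))
    {ι : Type*} [Fintype ι] (w : ι → ℝ) (P : ι → (Fin d → ℝ)) :
    (∫ y, (∑ i, w i * G (y - P i)) ^ 2)
      = ∑ i, ∑ j, w i * w j * H (P i - P j) := by
  have hmem : ∀ a : Fin d → ℝ, MemLp (fun y => G (y - a)) 2 (volume : Measure (Fin d → ℝ)) :=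
    fun a => hG2.comp_measurePreserving (measurePreserving_sub_right volume a)
  have hint : ∀ a b : Fin d → ℝ,
      Integrable (fun y => G (y - a) * G (y - b)) (volume : Measure (Fin d → ℝ)) := by
    intro a b
    have : MemLp ((fun y => G (y - a)) • (fun y => G (y - b))) 1
        (volume : Measure (Fin d → ℝ)) :=
      (hmem b).smul (hmem a) (hpqr := ⟨by norm_num [ENNReal.inv_two_add_inv_two]⟩)
    exact memLp_one_iff_integrable.mp this
  have hint' : ∀ a b : Fin d → ℝ, ∀ u v : ℝ,
      Integrable (fun y => u * G (y - a) * (v * G (y - b)))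
        (volume : Measure (Fin d → ℝ)) := by
    intro a b u v
    have := ((hint a b).const_mul (u * v))
    simpa [mul_assoc, mul_comm, mul_left_comm] using this
  calc (∫ y, (∑ i, w i * G (y - P i)) ^ 2)
      = ∫ y, ∑ i, ∑ j, w i * G (y - P i) * (w j * G (y - P j)) := by
        congr 1; funext y; rw [sq, Finset.sum_mul_sum]
    _ = ∑ i, ∑ j, ∫ y, w i * G (y - P i) * (w j * G (y - P j)) := by
        rw [integral_finset_sum _ (fun i _ => integrable_finset_sum _ fun j _ => hint' _ _ _ _)]
        exact Finset.sum_congr rfl fun i _ => by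
          rw [integral_finset_sum _ (fun j _ => hint' _ _ _ _)]
    _ = ∑ i, ∑ j, w i * w j * H (P i - P j) := by
        refine Finset.sum_congr rfl fun i _ => Finset.sum_congr rfl fun j _ => ?_
        have h : (fun y => w i * G (y - P i) * (w j * G (y - P j)))
            = fun y => (w i * w j) * (G (y - P i) * G (y - P j)) := by
          funext y; ring
        rw [h, integral_const_mul, hH]

/-- A-posteriori error identity of Section II-C: with `μ = Σ γ_l δ_{ξ_l}`,
`μ^N = Σ c_k δ_{x_k}`, and `q`, `q^N`, `r^N` defined from the data `f`,
`‖G∗(μ − μ^N)‖²_{L²} + λ ∫ (q − q^N) d(μ − μ^N) = λ ∫ r^N d(μ − μ^N)`,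
where the integrals against `μ − μ^N` are the finite sums
`Σ_l γ_l φ(ξ_l) − Σ_k c_k φ(x_k)`. -/
theorem aposteriori_error_identity
    (d L N : ℕ)
    (G : (Fin d → ℝ) → ℝ) (hGm : Measurable G)
    (hGeven : ∀ y, G (-y) = G y)
    (hG2 : MemLp G 2 (volume : Measure (Fin d → ℝ)))
    (H : (Fin d → ℝ) → ℝ)
    (hH : ∀ a b : Fin d → ℝ, (∫ y, G (y - a) * G (y - b)) = H (a - b))
    (lam : ℝ) (hlam : 0 < lam)
    (f : (Fin d → ℝ) → ℝ) (hf2 : MemLp f 2 (volume : Measure (Fin d → ℝ)))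
    (ξ : Fin L → (Fin d → ℝ)) (hξ : Function.Injective ξ) (γ : Fin L → ℝ)
    (x : Fin N → (Fin d → ℝ)) (hx : Function.Injective x) (c : Fin N → ℝ)
    (q qN rN : (Fin d → ℝ) → ℝ)
    (hq : ∀ z, q z =
      ((∫ y, G (z - y) * f y) - ∑ l, γ l * H (z - ξ l)) / lam)
    (hqN : ∀ z, qN z =
      min (max (((∫ y, G (z - y) * f y) - ∑ k, c k * H (z - x k)) / lam) (-1)) 1)
    (hrN : ∀ z, rN z =
      ((∫ y, G (z - y) * f y) - ∑ k, c k * H (z - x k)) / lam - qN z) :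
    (∫ y, (∑ l, γ l * G (y - ξ l) - ∑ k, c k * G (y - x k)) ^ 2)
      + lam * ((∑ l, γ l * (q (ξ l) - qN (ξ l)))
          - ∑ k, c k * (q (x k) - qN (x k)))
      = lam * ((∑ l, γ l * rN (ξ l)) - ∑ k, c k * rN (x k)) := by
  have hlam' : lam ≠ 0 := hlam.ne'
  -- combined family over `Fin L ⊕ Fin N`
  set w : Fin L ⊕ Fin N → ℝ := Sum.elim γ (fun k => -c k) with hw
  set P : Fin L ⊕ Fin N → (Fin d → ℝ) := Sum.elim ξ x with hP
  -- the `L²` norm as a double sum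
  have hInt : (∫ y, (∑ l, γ l * G (y - ξ l) - ∑ k, c k * G (y - x k)) ^ 2)
      = ∑ i, ∑ j, w i * w j * H (P i - P j) := by
    rw [← sq_integral_sum_shift hG2 hH w P]
    congr 1; funext y
    rw [Fintype.sum_sum_type]
    simp [hw, hP, sub_eq_add_neg, ← Finset.sum_neg_distrib]
  -- expansion of the double sum
  have hExpand : (∑ i, ∑ j, w i * w j * H (P i - P j))
      = (∑ l, γ l * ((∑ l', γ l' * H (ξ l - ξ l')) - ∑ k, c k * H (ξ l - x k)))
        - ∑ k, c k * ((∑ l', γ l' * H (x k - ξ l')) - ∑ k', c k' * H (x k - x k')) := by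
    simp only [hw, hP, Fintype.sum_sum_type, Sum.elim_inl, Sum.elim_inr]
    simp only [neg_mul, mul_neg, neg_neg, Finset.sum_neg_distrib]
    rw [Finset.sum_add_distrib, Finset.sum_add_distrib]
    simp only [mul_sub, Finset.sum_sub_distrib, Finset.mul_sum, mul_assoc]
    simp only [Finset.sum_neg_distrib]
    abel
  -- pointwise identity eliminating `f` and `qN`
  have h1 : ∀ z, lam * (rN z - (q z - qN z))
      = (∑ l, γ l * H (z - ξ l)) - ∑ k, c k * H (z - x k) := by
    intro z; rw [hrN, hq]; field_simp; ring
  -- sums of the pointwise identity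
  have h2 : ∀ (M : ℕ) (p : Fin M → (Fin d → ℝ)) (a : Fin M → ℝ),
      lam * ((∑ i, a i * rN (p i)) - ∑ i, a i * (q (p i) - qN (p i)))
        = ∑ i, a i * ((∑ l', γ l' * H (p i - ξ l')) - ∑ k, c k * H (p i - x k)) := by
    intro M p a
    rw [← Finset.sum_sub_distrib, Finset.mul_sum]
    refine Finset.sum_congr rfl fun i _ => ?_
    rw [← mul_sub]
    rw [show lam * (a i * (rN (p i) - (q (p i) - qN (p i))))
        = a i * (lam * (rN (p i) - (q (p i) - qN (p i)))) by ring, h1]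
  have h2ξ := h2 L ξ γ
  have h2x := h2 N x c
  rw [hInt, hExpand]
  linarith [h2ξ, h2x]
end

section
/- Assume in addition the continuum optimality condition for μ: |q(x)| ≤ 1 for all x ∈ ℝ^d and q(ξ_l) = sign(γ_l) for every l with γ_l ≠ 0; and the discrete optimality condition for μ^N: |(G∗f)(x_k) − (H∗μ^N)(x_k)| ≤ λ for every k, with (G∗f)(x_k) − (H∗μ^N)(x_k) = λ · sign(c_k) whenever c_k ≠ 0. Then ∫ (q − q^N) d(μ − μ^N) ≥ 0, ∫ r^N dμ^N = 0, and the a-posteriori error estimate ‖G∗(μ − μ^N)‖²_{L²} + λ ∫ (q − q^N) d(μ − μ^N) ≤ λ ‖r^N‖_∞ Σ_{l=1}^L |γ_l| holds; in particular ‖G∗(μ − μ^N)‖²_{L²} ≤ λ ‖r^N‖_∞ ‖μ‖_TV, where ‖μ‖_TV = Σ_{l=1}^L |γ_l| and ‖r^N‖_∞ = sup_{x ∈ ℝ^d} |r^N(x)|. (A-posteriori error estimate of Section II-C.) -/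
open MeasureTheory

lemma integrable_mul_of_memL2 {α : Type*} [MeasurableSpace α] {μ : Measure α} {g h : α → ℝ}
    (hg : MemLp g 2 μ) (hh : MemLp h 2 μ) : Integrable (fun y => g y * h y) μ := by
  have hm : AEStronglyMeasurable (fun y => g y * h y) μ := hg.1.mul hh.1
  refine ((hg.integrable_sq.add hh.integrable_sq).div_const 2).mono' hm ?_
  filter_upwards with y
  have : |g y| * |h y| ≤ (g y ^ 2 + h y ^ 2) / 2 := by
    nlinarith [sq_nonneg (|g y| - |h y|), sq_abs (g y), sq_abs (h y)]
  simpa [Real.norm_eq_abs] using this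

lemma clamp_eq {t : ℝ} (h1 : -1 ≤ t) (h2 : t ≤ 1) : min (max t (-1)) 1 = t := by
  rw [max_eq_left h1, min_eq_left h2]

lemma clamp_abs (t : ℝ) : |min (max t (-1)) 1| ≤ 1 := by
  rw [abs_le]
  exact ⟨le_min (le_max_right _ _) (by norm_num), min_le_right _ _⟩

lemma clamp_dist {t s : ℝ} (hs : |s| ≤ 1) : |t - min (max t (-1)) 1| ≤ |t - s| := by
  obtain ⟨hs1, hs2⟩ := abs_le.mp hs
  rcases le_total t (-1) with h | h
  · rw [max_eq_right h, min_eq_left (by norm_num)]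
    have e : |t - (-1)| = -1 - t := by rw [abs_of_nonpos (by linarith)]; ring
    rw [e]
    calc -1 - t ≤ s - t := by linarith
      _ ≤ |s - t| := le_abs_self _
      _ = |t - s| := abs_sub_comm _ _
  · rcases le_total t 1 with h' | h'
    · rw [clamp_eq h h', sub_self, abs_zero]; exact abs_nonneg _
    · rw [max_eq_left (by linarith), min_eq_right h']
      have e : |t - 1| = t - 1 := abs_of_nonneg (by linarith)
      rw [e]
      calc t - 1 ≤ t - s := by linarith
        _ ≤ |t - s| := le_abs_self _

lemma sign_helper {r : ℝ} (h : r ≠ 0) : r * Real.sign r = |r| := by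
  rcases lt_trichotomy r 0 with hr | hr | hr
  · rw [Real.sign_of_neg hr, abs_of_neg hr]; ring
  · exact absurd hr h
  · rw [Real.sign_of_pos hr, abs_of_pos hr]; ring

/-- A-posteriori error estimate of Section II-C: under the continuum optimality
condition for `μ` and the discrete optimality condition for `μ^N`, one has
`∫ (q − q^N) d(μ − μ^N) ≥ 0`, `∫ r^N dμ^N = 0`, and
`‖G∗(μ − μ^N)‖² + λ ∫ (q − q^N) d(μ − μ^N) ≤ λ ‖r^N‖_∞ Σ |γ_l|`;
in particular `‖G∗(μ − μ^N)‖² ≤ λ ‖r^N‖_∞ ‖μ‖_TV`. -/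
theorem aposteriori_error_estimate
    (d L N : ℕ)
    (G : (Fin d → ℝ) → ℝ) (hGm : Measurable G)
    (hGeven : ∀ y, G (-y) = G y)
    (hG2 : MemLp G 2 (volume : Measure (Fin d → ℝ)))
    (H : (Fin d → ℝ) → ℝ)
    (hH : ∀ a b : Fin d → ℝ, (∫ y, G (y - a) * G (y - b)) = H (a - b))
    (lam : ℝ) (hlam : 0 < lam)
    (f : (Fin d → ℝ) → ℝ) (hf2 : MemLp f 2 (volume : Measure (Fin d → ℝ)))
    (ξ : Fin L → (Fin d → ℝ)) (hξ : Function.Injective ξ) (γ : Fin L → ℝ)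
    (x : Fin N → (Fin d → ℝ)) (hx : Function.Injective x) (c : Fin N → ℝ)
    (q qN rN : (Fin d → ℝ) → ℝ)
    (hq : ∀ z, q z =
      ((∫ y, G (z - y) * f y) - ∑ l, γ l * H (z - ξ l)) / lam)
    (hqN : ∀ z, qN z =
      min (max (((∫ y, G (z - y) * f y) - ∑ k, c k * H (z - x k)) / lam) (-1)) 1)
    (hrN : ∀ z, rN z =
      ((∫ y, G (z - y) * f y) - ∑ k, c k * H (z - x k)) / lam - qN z)
    -- continuum optimality condition for μ
    (hq_bound : ∀ z, |q z| ≤ 1)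
    (hq_sign : ∀ l : Fin L, γ l ≠ 0 → q (ξ l) = Real.sign (γ l))
    -- discrete optimality condition for μ^N
    (hdisc_bound : ∀ k : Fin N,
      |(∫ y, G (x k - y) * f y) - ∑ k', c k' * H (x k - x k')| ≤ lam)
    (hdisc_sign : ∀ k : Fin N, c k ≠ 0 →
      (∫ y, G (x k - y) * f y) - ∑ k', c k' * H (x k - x k')
        = lam * Real.sign (c k)) :
    0 ≤ (∑ l, γ l * (q (ξ l) - qN (ξ l))) - ∑ k, c k * (q (x k) - qN (x k)) ∧
    (∑ k, c k * rN (x k)) = 0 ∧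
    (∫ y, (∑ l, γ l * G (y - ξ l) - ∑ k, c k * G (y - x k)) ^ 2)
        + lam * ((∑ l, γ l * (q (ξ l) - qN (ξ l)))
            - ∑ k, c k * (q (x k) - qN (x k)))
      ≤ lam * (⨆ z : Fin d → ℝ, |rN z|) * ∑ l, |γ l| ∧
    (∫ y, (∑ l, γ l * G (y - ξ l) - ∑ k, c k * G (y - x k)) ^ 2)
      ≤ lam * (⨆ z : Fin d → ℝ, |rN z|) * ∑ l, |γ l| := by
  have hlam' : lam ≠ 0 := hlam.ne'
  -- translates of G
  have hT : ∀ a : Fin d → ℝ, MemLp (fun y => G (y - a)) 2 (volume : Measure (Fin d → ℝ)) :=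
    fun a => hG2.comp_measurePreserving (measurePreserving_sub_right volume a)
  have hmulI : ∀ a b : Fin d → ℝ, Integrable (fun y => G (y - a) * G (y - b)) volume :=
    fun a b => integrable_mul_of_memL2 (hT a) (hT b)
  -- bound on H
  set M : ℝ := ∫ y, (G y) ^ 2 with hMdef
  have hM0 : 0 ≤ M := integral_nonneg fun y => sq_nonneg _
  have hHb : ∀ w : Fin d → ℝ, |H w| ≤ M := by
    intro w
    have h1 : (∫ y, G (y - w) * G y) = H w := by
      have := hH w 0
      simpa using this
    have h2 : Integrable (fun y => G (y - w) * G y) volume :=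
      integrable_mul_of_memL2 (hT w) hG2
    have h3 : Integrable (fun y => (G (y - w) ^ 2 + (G y) ^ 2) / 2) volume :=
      ((hT w).integrable_sq.add hG2.integrable_sq).div_const 2
    have h4 : (∫ y, G (y - w) ^ 2) = M := by
      rw [hMdef]
      exact integral_sub_right_eq_self (fun y => (G y) ^ 2) w
    calc |H w| = |∫ y, G (y - w) * G y| := by rw [h1]
      _ ≤ ∫ y, |G (y - w)| * |G y| := by
          simpa [Real.norm_eq_abs] using
            norm_integral_le_integral_norm (μ := (volume : Measure (Fin d → ℝ)))
              (fun y => G (y - w) * G y)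
      _ ≤ ∫ y, (G (y - w) ^ 2 + (G y) ^ 2) / 2 := by
          refine integral_mono (by simpa [abs_mul] using h2.abs) h3 fun y => ?_
          nlinarith [sq_nonneg (|G (y - w)| - |G y|), sq_abs (G (y - w)), sq_abs (G y)]
      _ = ((∫ y, G (y - w) ^ 2) + ∫ y, (G y) ^ 2) / 2 := by
          rw [integral_div, integral_add (hT w).integrable_sq hG2.integrable_sq]
      _ = M := by rw [h4, ← hMdef]; ring
  -- the functions Φ and P
  set Φ : (Fin d → ℝ) → ℝ := fun y => ∑ l, γ l * G (y - ξ l) - ∑ k, c k * G (y - x k)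
    with hΦdef
  have hΦy : ∀ y, Φ y = ∑ l, γ l * G (y - ξ l) - ∑ k, c k * G (y - x k) := fun y => by
    rw [hΦdef]
  have hΦ : MemLp Φ 2 (volume : Measure (Fin d → ℝ)) := by
    rw [hΦdef]
    exact (memLp_finset_sum _ fun l _ => (hT (ξ l)).const_mul (γ l)).sub
      (memLp_finset_sum _ fun k _ => (hT (x k)).const_mul (c k))
  set P : (Fin d → ℝ) → ℝ := fun z => ∑ l, γ l * H (z - ξ l) - ∑ k, c k * H (z - x k)
    with hPdef
  have hPy : ∀ z, P z = ∑ l, γ l * H (z - ξ l) - ∑ k, c k * H (z - x k) := fun z => by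
    rw [hPdef]
  -- inner products with translates
  have inner_eval : ∀ a : Fin d → ℝ, (∫ y, G (y - a) * Φ y) = P a := by
    intro a
    have hpt : ∀ y, G (y - a) * Φ y =
        (∑ l, γ l * (G (y - a) * G (y - ξ l))) - ∑ k, c k * (G (y - a) * G (y - x k)) := by
      intro y
      rw [hΦy y, mul_sub, Finset.mul_sum, Finset.mul_sum]
      exact congrArg₂ (· - ·) (Finset.sum_congr rfl fun i _ => by ring)
        (Finset.sum_congr rfl fun i _ => by ring)
    calc (∫ y, G (y - a) * Φ y)
        = ∫ y, ((∑ l, γ l * (G (y - a) * G (y - ξ l)))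
            - ∑ k, c k * (G (y - a) * G (y - x k))) := by simp only [hpt]
      _ = (∫ y, ∑ l, γ l * (G (y - a) * G (y - ξ l)))
            - ∫ y, ∑ k, c k * (G (y - a) * G (y - x k)) :=
          integral_sub (integrable_finset_sum _ fun l _ => (hmulI a (ξ l)).const_mul (γ l))
            (integrable_finset_sum _ fun k _ => (hmulI a (x k)).const_mul (c k))
      _ = (∑ l, ∫ y, γ l * (G (y - a) * G (y - ξ l)))
            - ∑ k, ∫ y, c k * (G (y - a) * G (y - x k)) := by
          rw [integral_finset_sum _ fun l _ => (hmulI a (ξ l)).const_mul (γ l),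
            integral_finset_sum _ fun k _ => (hmulI a (x k)).const_mul (c k)]
      _ = P a := by
          simp only [integral_const_mul, hH]
          rw [hPy a]
  -- expansion of the squared norm
  have hsq : (∫ y, Φ y ^ 2) = ∑ l, γ l * P (ξ l) - ∑ k, c k * P (x k) := by
    have hpt2 : ∀ y, Φ y ^ 2 =
        (∑ l, γ l * (G (y - ξ l) * Φ y)) - ∑ k, c k * (G (y - x k) * Φ y) := by
      intro y
      rw [sq]
      nth_rewrite 1 [hΦy y]
      rw [sub_mul, Finset.sum_mul, Finset.sum_mul]
      exact congrArg₂ (· - ·) (Finset.sum_congr rfl fun i _ => by ring)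
        (Finset.sum_congr rfl fun i _ => by ring)
    have hI1 : ∀ a : Fin d → ℝ, Integrable (fun y => G (y - a) * Φ y) volume :=
      fun a => integrable_mul_of_memL2 (hT a) hΦ
    calc (∫ y, Φ y ^ 2)
        = ∫ y, ((∑ l, γ l * (G (y - ξ l) * Φ y)) - ∑ k, c k * (G (y - x k) * Φ y)) := by
          simp only [hpt2]
      _ = (∫ y, ∑ l, γ l * (G (y - ξ l) * Φ y))
            - ∫ y, ∑ k, c k * (G (y - x k) * Φ y) :=
          integral_sub (integrable_finset_sum _ fun l _ => (hI1 (ξ l)).const_mul (γ l))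
            (integrable_finset_sum _ fun k _ => (hI1 (x k)).const_mul (c k))
      _ = (∑ l, ∫ y, γ l * (G (y - ξ l) * Φ y))
            - ∑ k, ∫ y, c k * (G (y - x k) * Φ y) := by
          rw [integral_finset_sum _ fun l _ => (hI1 (ξ l)).const_mul (γ l),
            integral_finset_sum _ fun k _ => (hI1 (x k)).const_mul (c k)]
      _ = ∑ l, γ l * P (ξ l) - ∑ k, c k * P (x k) := by
          simp only [integral_const_mul, inner_eval]
  -- pointwise identity linking P, q, qN, rN
  have hptz : ∀ z, P z + lam * (q z - qN z) = lam * rN z := by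
    intro z
    rw [hPy z, hq z, hrN z]
    field_simp
    ring
  -- Part 2 : rN vanishes at the grid points
  have part2 : ∀ k : Fin N, rN (x k) = 0 := by
    intro k
    have ht : |((∫ y, G (x k - y) * f y) - ∑ k', c k' * H (x k - x k')) / lam| ≤ 1 := by
      rw [abs_div, abs_of_pos hlam]
      exact (div_le_one hlam).mpr (hdisc_bound k)
    obtain ⟨ht1, ht2⟩ := abs_le.mp ht
    rw [hrN, hqN, clamp_eq ht1 ht2, sub_self]
  have part2sum : (∑ k, c k * rN (x k)) = 0 :=
    Finset.sum_eq_zero fun k _ => by rw [part2 k, mul_zero]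
  -- Part 1 : nonnegativity
  have hγpos : ∀ l : Fin L, 0 ≤ γ l * (q (ξ l) - qN (ξ l)) := by
    intro l
    by_cases h : γ l = 0
    · simp [h]
    · rw [hq_sign l h, mul_sub, sign_helper h]
      have h2 : |qN (ξ l)| ≤ 1 := by rw [hqN]; exact clamp_abs _
      have h3 : γ l * qN (ξ l) ≤ |γ l| := by
        calc γ l * qN (ξ l) ≤ |γ l * qN (ξ l)| := le_abs_self _
          _ = |γ l| * |qN (ξ l)| := abs_mul _ _
          _ ≤ |γ l| * 1 := mul_le_mul_of_nonneg_left h2 (abs_nonneg _)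
          _ = |γ l| := mul_one _
      linarith
  have hcneg : ∀ k : Fin N, c k * (q (x k) - qN (x k)) ≤ 0 := by
    intro k
    by_cases h : c k = 0
    · simp [h]
    · have hqNx : qN (x k) = Real.sign (c k) := by
        have hsign : |Real.sign (c k)| ≤ 1 := by
          rcases lt_trichotomy (c k) 0 with h' | h' | h'
          · rw [Real.sign_of_neg h']; norm_num
          · exact absurd h' h
          · rw [Real.sign_of_pos h']; norm_num
        obtain ⟨hs1, hs2⟩ := abs_le.mp hsign
        rw [hqN, hdisc_sign k h, mul_div_cancel_left₀ _ hlam', clamp_eq hs1 hs2]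
      rw [hqNx, mul_sub, sign_helper h]
      have h3 : c k * q (x k) ≤ |c k| := by
        calc c k * q (x k) ≤ |c k * q (x k)| := le_abs_self _
          _ = |c k| * |q (x k)| := abs_mul _ _
          _ ≤ |c k| * 1 := mul_le_mul_of_nonneg_left (hq_bound (x k)) (abs_nonneg _)
          _ = |c k| := mul_one _
      linarith
  have part1 : 0 ≤ (∑ l, γ l * (q (ξ l) - qN (ξ l))) - ∑ k, c k * (q (x k) - qN (x k)) := by
    have h1 : 0 ≤ ∑ l, γ l * (q (ξ l) - qN (ξ l)) :=
      Finset.sum_nonneg fun l _ => hγpos l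
    have h2 : (∑ k, c k * (q (x k) - qN (x k))) ≤ 0 :=
      Finset.sum_nonpos fun k _ => hcneg k
    linarith
  -- the key identity
  have key : (∫ y, Φ y ^ 2)
      + lam * ((∑ l, γ l * (q (ξ l) - qN (ξ l))) - ∑ k, c k * (q (x k) - qN (x k)))
      = lam * ∑ l, γ l * rN (ξ l) := by
    have hterm : ∀ (r : ℝ) (z : Fin d → ℝ),
        r * P z + lam * (r * (q z - qN z)) = lam * (r * rN z) := by
      intro r z
      calc r * P z + lam * (r * (q z - qN z)) = r * (P z + lam * (q z - qN z)) := by ring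
        _ = r * (lam * rN z) := by rw [hptz z]
        _ = lam * (r * rN z) := by ring
    calc (∫ y, Φ y ^ 2)
        + lam * ((∑ l, γ l * (q (ξ l) - qN (ξ l))) - ∑ k, c k * (q (x k) - qN (x k)))
        = (∑ l, (γ l * P (ξ l) + lam * (γ l * (q (ξ l) - qN (ξ l)))))
            - ∑ k, (c k * P (x k) + lam * (c k * (q (x k) - qN (x k)))) := by
          rw [hsq, Finset.sum_add_distrib, Finset.sum_add_distrib,
            ← Finset.mul_sum, ← Finset.mul_sum]
          ring
      _ = (∑ l, lam * (γ l * rN (ξ l))) - ∑ k, lam * (c k * rN (x k)) := by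
          simp only [hterm]
      _ = lam * ∑ l, γ l * rN (ξ l) := by
          rw [← Finset.mul_sum, ← Finset.mul_sum, part2sum, mul_zero, sub_zero]
  -- boundedness of |rN| and the sup bound
  have hrNb : ∀ z, |rN z| ≤ ((∑ l, |γ l|) + ∑ k, |c k|) * M / lam := by
    intro z
    have h1 : |rN z| ≤ |((∫ y, G (z - y) * f y) - ∑ k, c k * H (z - x k)) / lam - q z| := by
      rw [hrN z, hqN z]
      exact clamp_dist (hq_bound z)
    have h2 : ((∫ y, G (z - y) * f y) - ∑ k, c k * H (z - x k)) / lam - q z = P z / lam := by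
      rw [hq z, hPy z]
      field_simp
      ring
    have h3 : |P z| ≤ ((∑ l, |γ l|) + ∑ k, |c k|) * M := by
      rw [hPy z]
      calc |(∑ l, γ l * H (z - ξ l)) - ∑ k, c k * H (z - x k)|
          ≤ |∑ l, γ l * H (z - ξ l)| + |∑ k, c k * H (z - x k)| := abs_sub _ _
        _ ≤ (∑ l, |γ l * H (z - ξ l)|) + ∑ k, |c k * H (z - x k)| :=
            add_le_add (Finset.abs_sum_le_sum_abs _ _) (Finset.abs_sum_le_sum_abs _ _)
        _ ≤ (∑ l, |γ l| * M) + ∑ k, |c k| * M := by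
            refine add_le_add (Finset.sum_le_sum fun l _ => ?_)
              (Finset.sum_le_sum fun k _ => ?_)
            · rw [abs_mul]; exact mul_le_mul_of_nonneg_left (hHb _) (abs_nonneg _)
            · rw [abs_mul]; exact mul_le_mul_of_nonneg_left (hHb _) (abs_nonneg _)
        _ = ((∑ l, |γ l|) + ∑ k, |c k|) * M := by
            rw [← Finset.sum_mul, ← Finset.sum_mul]; ring
    calc |rN z| ≤ |P z / lam| := h2 ▸ h1
      _ = |P z| / lam := by rw [abs_div, abs_of_pos hlam]
      _ ≤ ((∑ l, |γ l|) + ∑ k, |c k|) * M / lam := by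
          gcongr
  have hBdd : BddAbove (Set.range fun z : Fin d → ℝ => |rN z|) :=
    ⟨((∑ l, |γ l|) + ∑ k, |c k|) * M / lam, by rintro _ ⟨z, rfl⟩; exact hrNb z⟩
  have hsup : ∀ z, |rN z| ≤ ⨆ z : Fin d → ℝ, |rN z| :=
    fun z => le_ciSup hBdd z
  -- Part 3
  have hsumle : (∑ l, γ l * rN (ξ l)) ≤ (∑ l, |γ l|) * (⨆ z : Fin d → ℝ, |rN z|) := by
    rw [Finset.sum_mul]
    refine Finset.sum_le_sum fun l _ => ?_
    calc γ l * rN (ξ l) ≤ |γ l * rN (ξ l)| := le_abs_self _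
      _ = |γ l| * |rN (ξ l)| := abs_mul _ _
      _ ≤ |γ l| * ⨆ z : Fin d → ℝ, |rN z| :=
          mul_le_mul_of_nonneg_left (hsup (ξ l)) (abs_nonneg _)
  have part3 : (∫ y, Φ y ^ 2)
      + lam * ((∑ l, γ l * (q (ξ l) - qN (ξ l))) - ∑ k, c k * (q (x k) - qN (x k)))
      ≤ lam * (⨆ z : Fin d → ℝ, |rN z|) * ∑ l, |γ l| := by
    rw [key]
    calc lam * ∑ l, γ l * rN (ξ l)
        ≤ lam * ((∑ l, |γ l|) * (⨆ z : Fin d → ℝ, |rN z|)) :=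
          mul_le_mul_of_nonneg_left hsumle hlam.le
      _ = lam * (⨆ z : Fin d → ℝ, |rN z|) * ∑ l, |γ l| := by ring
  have hΦint : (∫ y, (∑ l, γ l * G (y - ξ l) - ∑ k, c k * G (y - x k)) ^ 2)
      = ∫ y, Φ y ^ 2 := by simp only [hΦy]
  refine ⟨part1, part2sum, ?_, ?_⟩
  · rw [hΦint]; exact part3
  · rw [hΦint]
    have := mul_nonneg hlam.le part1
    linarith [part3]
end

section
/- There exist constants h₀ > 0 and C > 0 (depending only on H, γ and λ) such that for every h ∈ (0, h₀), every x_K ∈ ℝ (with x_{K+1} := x_K + h) and every ξ ∈ [x_K, x_{K+1}]: the 2×2 linear system λ = γ H(x_K − ξ) − c_K H(0) − c_{K+1} H(h), λ = γ H(x_{K+1} − ξ) − c_K H(h) − c_{K+1} H(0) has a unique solution (c_K, c_{K+1}) ∈ ℝ², and the recovered amplitude γ̂ := c_K + c_{K+1} + λ/H(0) satisfies |γ̂ − γ| ≤ C h². (Second-order amplitude recovery from the two-peak normal equations, equations (25) and (36)–(37).) -/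
theorem taylor_bound_aux (H : ℝ → ℝ) (hH3 : ContDiff ℝ 3 H)
    (hHmax : ∀ y ≠ 0, H y < H 0) :
    ∃ M ≥ (0:ℝ), ∀ y : ℝ, |y| ≤ 1 → |H y - H 0| ≤ M * y ^ 2 := by
  have hdiff : Differentiable ℝ H := hH3.differentiable (by norm_num)
  have hd1 : ContDiff ℝ 2 (deriv H) :=
    (contDiff_succ_iff_deriv.mp (hH3.of_le (by norm_num))).2.2
  have hd1diff : Differentiable ℝ (deriv H) := hd1.differentiable (by norm_num)
  have hd2 : ContDiff ℝ 1 (deriv (deriv H)) :=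
    (contDiff_succ_iff_deriv.mp (hd1.of_le (by norm_num))).2.2
  have hd2cont : Continuous (deriv (deriv H)) := hd2.continuous
  obtain ⟨M0, hM0⟩ := (isCompact_Icc : IsCompact (Set.Icc (-1:ℝ) 1)).exists_bound_of_continuousOn
    hd2cont.continuousOn
  set M := max M0 0 with hMdef
  have hMnn : (0:ℝ) ≤ M := le_max_right _ _
  have hbound : ∀ t ∈ Set.Icc (-1:ℝ) 1, ‖deriv (deriv H) t‖ ≤ M :=
    fun t ht => (hM0 t ht).trans (le_max_left _ _)
  have hderiv0 : deriv H 0 = 0 := by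
    have hmax : IsLocalMax H 0 := Filter.Eventually.of_forall (fun x => by
      rcases eq_or_ne x 0 with h | h
      · simp [h]
      · exact (hHmax x h).le)
    exact hmax.deriv_eq_zero
  have key1 : ∀ t ∈ Set.Icc (-1:ℝ) 1, |deriv H t| ≤ M * |t| := by
    intro t ht
    have := Convex.norm_image_sub_le_of_norm_deriv_le (f := deriv H)
      (fun x _ => hd1diff x) hbound (convex_Icc _ _)
      (show (0:ℝ) ∈ Set.Icc (-1:ℝ) 1 by norm_num) ht
    simpa [hderiv0, Real.norm_eq_abs] using this
  refine ⟨M, hMnn, fun y hy => ?_⟩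
  have hy' := abs_le.mp hy
  have h0mem : (0:ℝ) ∈ Set.Icc (-1:ℝ) 1 := by norm_num
  have hymem : y ∈ Set.Icc (-1:ℝ) 1 := ⟨hy'.1, hy'.2⟩
  have hseg : Set.uIcc (0:ℝ) y ⊆ Set.Icc (-1:ℝ) 1 :=
    (Set.ordConnected_Icc).uIcc_subset h0mem hymem
  have hxy : ∀ x ∈ Set.uIcc (0:ℝ) y, |x| ≤ |y| := by
    intro x hx
    rcases Set.mem_uIcc.mp hx with ⟨h1, h2⟩ | ⟨h1, h2⟩ <;>
      (rw [abs_le]; constructor <;> [nlinarith [le_abs_self y, neg_abs_le y];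
        nlinarith [le_abs_self y, neg_abs_le y]])
  have key2 := Convex.norm_image_sub_le_of_norm_deriv_le (f := H)
    (fun x _ => hdiff x)
    (fun x hx => by
      simpa [Real.norm_eq_abs] using
        (key1 x (hseg hx)).trans (mul_le_mul_of_nonneg_left (hxy x hx) hMnn))
    (convex_uIcc 0 y) (Set.left_mem_uIcc) (Set.right_mem_uIcc)
  have hfin : |H y - H 0| ≤ M * |y| * |y| := by
    simpa [Real.norm_eq_abs] using key2
  calc |H y - H 0| ≤ M * |y| * |y| := hfin
    _ = M * y ^ 2 := by rw [mul_assoc, abs_mul_abs_self]; ring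

set_option maxHeartbeats 1600000 in
/-- Second-order amplitude recovery from the two-peak normal equations: there exist
`h₀ > 0` and `C > 0` (depending only on `H`, `γ`, `λ`) such that for `h ∈ (0, h₀)`,
any `x_K` and any `ξ ∈ [x_K, x_K + h]`, the 2×2 system
`λ = γ H(x_K − ξ) − c_K H(0) − c_{K+1} H(h)`,
`λ = γ H(x_K + h − ξ) − c_K H(h) − c_{K+1} H(0)`
has a unique solution, and the recovered amplitude `γ̂ = c_K + c_{K+1} + λ/H(0)`
satisfies `|γ̂ − γ| ≤ C h²`. -/
theorem amplitude_recovery_second_order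
    (H : ℝ → ℝ) (hH3 : ContDiff ℝ 3 H) (hHnn : ∀ y, 0 ≤ H y)
    (hH0 : 0 < H 0) (hHmax : ∀ y ≠ 0, H y < H 0)
    (hH'' : iteratedDeriv 2 H 0 < 0)
    (γ lam : ℝ) (hγ : 0 < γ) (hlam : 0 < lam) (hlam2 : lam < γ * H 0) :
    ∃ h₀ > 0, ∃ C > 0, ∀ h : ℝ, 0 < h → h < h₀ →
      ∀ xK ξ : ℝ, xK ≤ ξ → ξ ≤ xK + h →
      (∃! p : ℝ × ℝ,
          lam = γ * H (xK - ξ) - p.1 * H 0 - p.2 * H h ∧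
          lam = γ * H (xK + h - ξ) - p.1 * H h - p.2 * H 0) ∧
      ∀ cK cK1 : ℝ,
        lam = γ * H (xK - ξ) - cK * H 0 - cK1 * H h →
        lam = γ * H (xK + h - ξ) - cK * H h - cK1 * H 0 →
        |cK + cK1 + lam / H 0 - γ| ≤ C * h ^ 2 := by
  obtain ⟨M, hM, hTay⟩ := taylor_bound_aux H hH3 hHmax
  have ha : (0:ℝ) < H 0 := hH0
  have hane : H 0 ≠ 0 := ne_of_gt ha
  refine ⟨1, one_pos, 3 * γ * (M + 1) / H 0, div_pos (by nlinarith) ha, ?_⟩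
  intro h hh hh1 xK ξ hξ1 hξ2
  have hb0 : 0 ≤ H h := hHnn h
  have hba : H h < H 0 := hHmax h (ne_of_gt hh)
  have hD : (0:ℝ) < H 0 ^ 2 - H h ^ 2 := by nlinarith
  have hDne : H 0 ^ 2 - H h ^ 2 ≠ 0 := ne_of_gt hD
  constructor
  · -- unique solvability
    refine ⟨((H 0 * (γ * H (xK - ξ) - lam) - H h * (γ * H (xK + h - ξ) - lam)) / (H 0 ^ 2 - H h ^ 2),
             (H 0 * (γ * H (xK + h - ξ) - lam) - H h * (γ * H (xK - ξ) - lam)) / (H 0 ^ 2 - H h ^ 2)),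
           ⟨?_, ?_⟩, ?_⟩
    · field_simp
      ring
    · field_simp
      ring
    · rintro ⟨c, d⟩ ⟨e1, e2⟩
      simp only [Prod.mk.injEq]
      constructor
      · rw [eq_div_iff hDne]
        linear_combination (H 0) * e1 - (H h) * e2
      · rw [eq_div_iff hDne]
        linear_combination (H 0) * e2 - (H h) * e1
  · intro cK cK1 e1 e2
    have hu1 : |xK - ξ| ≤ 1 := by rw [abs_le]; constructor <;> linarith
    have hv1 : |xK + h - ξ| ≤ 1 := by rw [abs_le]; constructor <;> linarith
    have hh1' : |h| ≤ 1 := by rw [abs_le]; constructor <;> linarith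
    have squ : (xK - ξ) ^ 2 ≤ h ^ 2 := by nlinarith
    have sqv : (xK + h - ξ) ^ 2 ≤ h ^ 2 := by nlinarith
    have b1 : |H (xK - ξ) - H 0| ≤ (M + 1) * h ^ 2 := by
      have := hTay _ hu1; nlinarith
    have b2 : |H (xK + h - ξ) - H 0| ≤ (M + 1) * h ^ 2 := by
      have := hTay _ hv1; nlinarith
    have b3 : |H h - H 0| ≤ (M + 1) * h ^ 2 := by
      have := hTay _ hh1'; nlinarith
    have key0 : (cK + cK1) * (H 0 + H h) = γ * (H (xK - ξ) + H (xK + h - ξ)) - 2 * lam := by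
      linear_combination e1 + e2
    have hla : lam / H 0 * H 0 = lam := div_mul_cancel₀ lam hane
    have key : (cK + cK1 + lam / H 0 - γ) * (H 0 * (H 0 + H h)) =
        γ * H 0 * (H (xK - ξ) - H 0) + γ * H 0 * (H (xK + h - ξ) - H 0)
          + (lam - γ * H 0) * (H h - H 0) := by
      linear_combination (H 0) * key0 + (H 0 + H h) * hla
    have hga : (0:ℝ) < γ * H 0 := mul_pos hγ ha
    have t1 : |γ * H 0 * (H (xK - ξ) - H 0)| ≤ γ * H 0 * ((M + 1) * h ^ 2) := by
      rw [abs_mul, abs_of_pos hga]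
      exact mul_le_mul_of_nonneg_left b1 hga.le
    have t2 : |γ * H 0 * (H (xK + h - ξ) - H 0)| ≤ γ * H 0 * ((M + 1) * h ^ 2) := by
      rw [abs_mul, abs_of_pos hga]
      exact mul_le_mul_of_nonneg_left b2 hga.le
    have t3 : |(lam - γ * H 0) * (H h - H 0)| ≤ γ * H 0 * ((M + 1) * h ^ 2) := by
      rw [abs_mul]
      have hlg : |lam - γ * H 0| ≤ γ * H 0 := by
        rw [abs_le]; constructor <;> linarith
      exact mul_le_mul hlg b3 (abs_nonneg _) hga.le
    have hR : |γ * H 0 * (H (xK - ξ) - H 0) + γ * H 0 * (H (xK + h - ξ) - H 0)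
          + (lam - γ * H 0) * (H h - H 0)| ≤ 3 * (γ * H 0) * ((M + 1) * h ^ 2) := by
      have h3 := abs_add_three (γ * H 0 * (H (xK - ξ) - H 0))
        (γ * H 0 * (H (xK + h - ξ) - H 0)) ((lam - γ * H 0) * (H h - H 0))
      linarith
    have hpos : (0:ℝ) < H 0 * (H 0 + H h) := by nlinarith
    have habs : |cK + cK1 + lam / H 0 - γ| * (H 0 * (H 0 + H h))
        ≤ 3 * (γ * H 0) * ((M + 1) * h ^ 2) := by
      rw [← abs_of_pos hpos, ← abs_mul, key]
      exact hR
    rw [div_mul_eq_mul_div, le_div_iff₀ ha]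
    nlinarith [abs_nonneg (cK + cK1 + lam / H 0 - γ),
      mul_nonneg (mul_nonneg (abs_nonneg (cK + cK1 + lam / H 0 - γ)) ha.le) hb0]
end

section
/- There exist constants h₀ > 0 and C > 0 (depending only on H, γ and λ) such that for every h ∈ (0, h₀), every x_K ∈ ℝ (with x_{K+1} := x_K + h) and every ξ ∈ [x_K, x_{K+1}]: the 2×2 linear system λ = γ H(x_K − ξ) − c_K H(0) − c_{K+1} H(h), λ = γ H(x_{K+1} − ξ) − c_K H(h) − c_{K+1} H(0) has a unique solution (c_K, c_{K+1}) ∈ ℝ², the quantity γ̂ := c_K + c_{K+1} + λ/H(0) is nonzero, and the recovered peak location ξ̂ := (x_K + x_{K+1})/2 + (c_{K+1} − c_K)(x_{K+1} − x_K)/(2 γ̂) satisfies |ξ̂ − ξ| ≤ C h². (Second-order location recovery from the two-peak normal equations, equation (26); the claimed 'second order approximation in h' of the exact peak location.) -/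
set_option maxHeartbeats 1000000

open Set

lemma mvt_abs {f f' : ℝ → ℝ} (hf : ∀ x, HasDerivAt f (f' x) x)
    {s : Set ℝ} (hs : Convex ℝ s) {C : ℝ} (hC : ∀ x ∈ s, |f' x| ≤ C)
    {a b : ℝ} (ha : a ∈ s) (hb : b ∈ s) : |f b - f a| ≤ C * |b - a| := by
  have := hs.norm_image_sub_le_of_norm_hasDerivWithin_le
    (f' := f') (fun x _ => (hf x).hasDerivWithinAt)
    (fun x hx => by simpa [Real.norm_eq_abs] using hC x hx) ha hb
  simpa [Real.norm_eq_abs] using this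

lemma diff_all (H : ℝ → ℝ) (hH3 : ContDiff ℝ 3 H) :
    (∀ x, HasDerivAt H (deriv H x) x) ∧
    (∀ x, HasDerivAt (deriv H) (deriv (deriv H) x) x) ∧
    (∀ x, HasDerivAt (deriv (deriv H)) (deriv (deriv (deriv H)) x) x) ∧
    Continuous (deriv (deriv (deriv H))) := by
  have h0 : ContDiff ℝ ((3:ℕ) : ℕ∞) H := by exact_mod_cast hH3
  have h1 : ContDiff ℝ ((2:ℕ) : ℕ∞) (deriv H) := by
    have := (hH3 : ContDiff ℝ 3 H)
    have h2 : ContDiff ℝ ((2:ℕ) + (1:ℕ) : ℕ) H := by exact_mod_cast hH3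
    simpa using h2.iterate_deriv' 2 1
  have h2 : ContDiff ℝ ((1:ℕ) : ℕ∞) (deriv (deriv H)) := by
    have h2' : ContDiff ℝ ((1:ℕ) + (2:ℕ) : ℕ) H := by exact_mod_cast hH3
    simpa [Function.iterate_succ, Function.comp] using h2'.iterate_deriv' 1 2
  refine ⟨fun x => (h0.differentiable (by norm_num) x).hasDerivAt,
    fun x => (h1.differentiable (by norm_num) x).hasDerivAt,
    fun x => (h2.differentiable (by norm_num) x).hasDerivAt, ?_⟩
  exact h2.continuous_deriv (by norm_num)

/-- Quantitative second-order Taylor remainder via two mean value steps. -/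
lemma taylor_step (H : ℝ → ℝ) (hH3 : ContDiff ℝ 3 H) (h10 : deriv H 0 = 0)
    (M : ℝ) (hM : ∀ x ∈ Icc (-1:ℝ) 1, |deriv (deriv (deriv H)) x| ≤ M)
    (u : ℝ) (hu0 : 0 ≤ u) (hu1 : u ≤ 1) :
    ∀ y ∈ Icc (-u) u, ∀ z ∈ Icc (-u) u,
      |(H z - H 0 - deriv (deriv H) 0 / 2 * z ^ 2)
        - (H y - H 0 - deriv (deriv H) 0 / 2 * y ^ 2)| ≤ M * u ^ 2 * |z - y| := by
  obtain ⟨hd1, hd2, hd3, _⟩ := diff_all H hH3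
  set A := deriv (deriv H) 0 with hA
  have hsub : Icc (-u) u ⊆ Icc (-1:ℝ) 1 := Icc_subset_Icc (by linarith) hu1
  -- Step 1: |H'' x - A| ≤ M * u on Icc (-u) u
  have step1 : ∀ x ∈ Icc (-u) u, |deriv (deriv H) x - A| ≤ M * u := by
    intro x hx
    have := mvt_abs hd3 (convex_Icc (-1:ℝ) 1) hM (a := 0) (b := x)
      (by constructor <;> norm_num) (hsub hx)
    have hxb : |x - 0| ≤ u := by
      rw [sub_zero, abs_le]; exact ⟨hx.1, hx.2⟩
    have hM0 : 0 ≤ M := le_trans (abs_nonneg _) (hM 0 (by constructor <;> norm_num))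
    calc |deriv (deriv H) x - A| ≤ M * |x - 0| := this
      _ ≤ M * u := mul_le_mul_of_nonneg_left hxb hM0
  -- Step 2: |H' x - A x| ≤ M * u^2 on Icc (-u) u
  have step2 : ∀ x ∈ Icc (-u) u, |deriv H x - A * x| ≤ M * u ^ 2 := by
    intro x hx
    have hg : ∀ y, HasDerivAt (fun y => deriv H y - A * y)
        (deriv (deriv H) y - A) y := by
      intro y
      have this : HasDerivAt (fun y => deriv H y - A * y) (deriv (deriv H) y - A * 1) y := (hd2 y).sub ((hasDerivAt_id y).const_mul A)
      rw [mul_one] at this; exact this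
    have := mvt_abs hg (convex_Icc (-u) u) step1 (a := 0) (b := x)
      (by constructor <;> linarith) hx
    have hxb : |x - 0| ≤ u := by rw [sub_zero, abs_le]; exact ⟨hx.1, hx.2⟩
    have hM0 : 0 ≤ M := le_trans (abs_nonneg _) (hM 0 (by constructor <;> norm_num))
    have : |deriv H x - A * x - (deriv H 0 - A * 0)| ≤ M * u * |x - 0| := this
    rw [h10] at this
    calc |deriv H x - A * x| = |deriv H x - A * x - (0 - A * 0)| := by ring_nf
      _ ≤ M * u * |x - 0| := this
      _ ≤ M * u * u := mul_le_mul_of_nonneg_left hxb (mul_nonneg hM0 hu0)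
      _ = M * u ^ 2 := by ring
  -- Step 3
  intro y hy z hz
  have hg : ∀ x, HasDerivAt (fun x => H x - H 0 - A / 2 * x ^ 2)
      (deriv H x - A * x) x := by
    intro x
    have h : HasDerivAt (fun x => H x - H 0 - A / 2 * x ^ 2) (deriv H x - A / 2 * ((2:ℕ) * x ^ (2 - 1))) x := ((hd1 x).sub_const (H 0)).sub (((hasDerivAt_pow 2 x)).const_mul (A/2))
    convert h using 1
    simp; ring
  exact mvt_abs hg (convex_Icc (-u) u) step2 hy hz

/-- Second-order location recovery from the two-peak normal equations: there exist
`h₀ > 0` and `C > 0` (depending only on `H`, `γ`, `λ`) such that for `h ∈ (0, h₀)`,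
any `x_K` (with `x_{K+1} = x_K + h`) and any `ξ ∈ [x_K, x_{K+1}]`, the 2×2 system
`λ = γ H(x_K − ξ) − c_K H(0) − c_{K+1} H(h)`,
`λ = γ H(x_{K+1} − ξ) − c_K H(h) − c_{K+1} H(0)`
has a unique solution, the quantity `γ̂ = c_K + c_{K+1} + λ/H(0)` is nonzero, and the
recovered location `ξ̂ = (x_K + x_{K+1})/2 + (c_{K+1} − c_K)(x_{K+1} − x_K)/(2γ̂)`
satisfies `|ξ̂ − ξ| ≤ C h²`. -/
theorem location_recovery_second_order
    (H : ℝ → ℝ) (hH3 : ContDiff ℝ 3 H) (hHnn : ∀ y, 0 ≤ H y)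
    (hH0 : 0 < H 0) (hHmax : ∀ y ≠ 0, H y < H 0)
    (hH'' : iteratedDeriv 2 H 0 < 0)
    (γ lam : ℝ) (hγ : 0 < γ) (hlam : 0 < lam) (hlam2 : lam < γ * H 0) :
    ∃ h₀ > 0, ∃ C > 0, ∀ h : ℝ, 0 < h → h < h₀ →
      ∀ xK ξ : ℝ, xK ≤ ξ → ξ ≤ xK + h →
      (∃! p : ℝ × ℝ,
          lam = γ * H (xK - ξ) - p.1 * H 0 - p.2 * H h ∧
          lam = γ * H (xK + h - ξ) - p.1 * H h - p.2 * H 0) ∧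
      ∀ cK cK1 : ℝ,
        lam = γ * H (xK - ξ) - cK * H 0 - cK1 * H h →
        lam = γ * H (xK + h - ξ) - cK * H h - cK1 * H 0 →
        cK + cK1 + lam / H 0 ≠ 0 ∧
        |(xK + (xK + h)) / 2
            + (cK1 - cK) * ((xK + h) - xK) / (2 * (cK + cK1 + lam / H 0))
            - ξ| ≤ C * h ^ 2 := by
  obtain ⟨hd1, hd2, hd3, hcont3⟩ := diff_all H hH3
  have h10 : deriv H 0 = 0 := by
    have hmax : IsLocalMax H 0 := Filter.Eventually.of_forall (fun y => by
      by_cases hy : y = 0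
      · simp [hy]
      · exact (hHmax y hy).le)
    exact hmax.deriv_eq_zero
  set A := deriv (deriv H) 0 with hAdef
  have hA : A < 0 := by
    have h2 : iteratedDeriv 2 H = deriv (deriv H) := by
      rw [show (2:ℕ) = 1 + 1 from rfl, iteratedDeriv_succ, iteratedDeriv_one]
    rw [h2] at hH''
    exact hH''
  obtain ⟨M0, hM0⟩ := (isCompact_Icc (a := (-1:ℝ)) (b := 1)).exists_bound_of_continuousOn
    hcont3.continuousOn
  set M : ℝ := max M0 1 with hMdef
  have hM1 : (1:ℝ) ≤ M := le_max_right _ _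
  have hMpos : (0:ℝ) < M := by linarith
  have hM : ∀ x ∈ Set.Icc (-1:ℝ) 1, |deriv (deriv (deriv H)) x| ≤ M := fun x hx =>
    le_trans (by simpa [Real.norm_eq_abs] using hM0 x hx) (le_max_left _ _)
  have hα : (0:ℝ) < -A := by linarith
  set C1 : ℝ := (3*γ*H 0 + lam) * ((-A)/2 + M) / (H 0)^2 with hC1def
  have hC1pos : 0 < C1 := by
    rw [hC1def]
    apply div_pos
    · apply mul_pos (by nlinarith) (by nlinarith)
    · positivity
  set C : ℝ := (2*(-A)*C1 + 10*γ*M)/(γ*(-A)) + 1 with hCdef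
  have hCpos : 0 < C := by
    have h0 : 0 ≤ (2*(-A)*C1 + 10*γ*M)/(γ*(-A)) := div_nonneg (by nlinarith) (by nlinarith)
    rw [hCdef]; linarith
  clear_value A M C1 C
  refine ⟨min 1 (min ((-A)/(4*M)) (Real.sqrt (γ/(2*C1)))), ?_, C, hCpos, ?_⟩
  · have u1 : 0 < Real.sqrt (γ/(2*C1)) := Real.sqrt_pos.2 (by positivity)
    have u2 : 0 < (-A)/(4*M) := div_pos hα (by linarith)
    simp only [lt_min_iff]
    exact ⟨one_pos, u2, u1⟩
  intro h hh hh0 xK ξ hx1 hx2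
  have hh1 : h ≤ 1 := le_of_lt (lt_of_lt_of_le hh0 (min_le_left _ _))
  have hhM : M * h ≤ (-A)/4 := by
    have h1 : h < (-A)/(4*M) := lt_of_lt_of_le hh0 (le_trans (min_le_right _ _) (min_le_left _ _))
    rw [lt_div_iff₀ (by linarith)] at h1
    linarith
  have hhC1 : C1 * h^2 ≤ γ/2 := by
    have h1 : h < Real.sqrt (γ/(2*C1)) := lt_of_lt_of_le hh0
      (le_trans (min_le_right _ _) (min_le_right _ _))
    have h2 : h^2 < γ/(2*C1) := by
      have := Real.sq_sqrt (le_of_lt (show (0:ℝ) < γ/(2*C1) by positivity))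
      nlinarith [Real.sqrt_nonneg (γ/(2*C1))]
    rw [lt_div_iff₀ (by positivity)] at h2
    nlinarith
  -- Taylor remainder facts
  have T := taylor_step H hH3 h10 M hM h hh.le hh1
  rw [← hAdef] at T
  have tRy : ∀ y ∈ Set.Icc (-h) h, |H y - H 0 - A/2*y^2| ≤ M*h^3 := by
    intro y hy
    have h0m : (0:ℝ) ∈ Set.Icc (-h) h := ⟨by linarith, by linarith⟩
    have := T 0 h0m y hy
    simp only [sub_zero] at this
    have hsimp : |H y - H 0 - A / 2 * y ^ 2 - (H 0 - H 0 - A / 2 * 0 ^ 2)| =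
        |H y - H 0 - A / 2 * y ^ 2| := by ring_nf
    rw [hsimp] at this
    have hyb : |y - 0| ≤ h := by rw [sub_zero, abs_le]; exact ⟨hy.1, hy.2⟩
    rw [sub_zero] at hyb
    calc |H y - H 0 - A/2*y^2| ≤ M*h^2*|y| := by simpa using this
      _ ≤ M*h^2*h := mul_le_mul_of_nonneg_left hyb (by positivity)
      _ = M*h^3 := by ring
  have hma : xK - ξ ∈ Set.Icc (-h) h := ⟨by linarith, by linarith⟩
  have hmb : xK + h - ξ ∈ Set.Icc (-h) h := ⟨by linarith, by linarith⟩
  have hmh : h ∈ Set.Icc (-h) h := ⟨by linarith, le_refl h⟩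
  have tRab : |(H (xK + h - ξ) - H 0 - A/2*(xK + h - ξ)^2)
      - (H (xK - ξ) - H 0 - A/2*(xK - ξ)^2)| ≤ M*h^3 := by
    have := T (xK - ξ) hma (xK + h - ξ) hmb
    have hba : |(xK + h - ξ) - (xK - ξ)| = h := by
      rw [show (xK + h - ξ) - (xK - ξ) = h by ring, abs_of_pos hh]
    rw [hba] at this
    calc _ ≤ M*h^2*h := this
      _ = M*h^3 := by ring
  -- coarse bounds |H y - H 0| ≤ ((-A)/2 + M) h²
  have habs : ∀ y ∈ Set.Icc (-h) h, |H y - H 0| ≤ ((-A)/2 + M)*h^2 := by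
    intro y hy
    have e1 := abs_le.1 (tRy y hy)
    have hy2 : y^2 ≤ h^2 := by nlinarith [hy.1, hy.2]
    have hh3 : M*h^3 ≤ M*h^2 := by nlinarith
    rw [abs_le]
    constructor <;> nlinarith [sq_nonneg y]
  -- denominator bounds
  have hRh := abs_le.1 (tRy h hmh)
  have hDn1 : (-A)/4*h^2 ≤ H 0 - H h := by nlinarith [mul_nonneg (sub_nonneg.2 hhM) (sq_nonneg h)]
  have hDnpos : 0 < H 0 - H h := by
    have := mul_pos (show (0:ℝ) < (-A)/4 by linarith) (pow_pos hh 2)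
    linarith
  have hHhnn : 0 ≤ H h := hHnn h
  have hsumpos : 0 < H 0 + H h := by linarith
  have hdet : 0 < H 0^2 - (H h)^2 := by nlinarith
  have hdetne : H 0^2 - (H h)^2 ≠ 0 := ne_of_gt hdet
  have hH0ne : H 0 ≠ 0 := ne_of_gt hH0
  constructor
  · -- existence and uniqueness of the linear system
    refine ⟨(((γ*H (xK - ξ) - lam)*H 0 - (γ*H (xK + h - ξ) - lam)*H h)/(H 0^2 - (H h)^2),
             ((γ*H (xK + h - ξ) - lam)*H 0 - (γ*H (xK - ξ) - lam)*H h)/(H 0^2 - (H h)^2)),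
      ⟨?_, ?_⟩, ?_⟩
    · field_simp
      ring
    · field_simp
      ring
    · rintro ⟨q1, q2⟩ ⟨e1, e2⟩
      have hq1 : q1 * (H 0^2 - (H h)^2) =
          (γ*H (xK - ξ) - lam)*H 0 - (γ*H (xK + h - ξ) - lam)*H h := by
        linear_combination (H 0) * e1 - (H h) * e2
      have hq2 : q2 * (H 0^2 - (H h)^2) =
          (γ*H (xK + h - ξ) - lam)*H 0 - (γ*H (xK - ξ) - lam)*H h := by
        linear_combination (H 0) * e2 - (H h) * e1
      have : q1 = ((γ*H (xK - ξ) - lam)*H 0 - (γ*H (xK + h - ξ) - lam)*H h)/(H 0^2 - (H h)^2) := by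
        rw [eq_div_iff hdetne]; linarith [hq1]
      have h2 : q2 = ((γ*H (xK + h - ξ) - lam)*H 0 - (γ*H (xK - ξ) - lam)*H h)/(H 0^2 - (H h)^2) := by
        rw [eq_div_iff hdetne]; linarith [hq2]
      exact Prod.ext this h2
  · intro cK cK1 e1 e2
    set g := cK + cK1 + lam / H 0 with hgdef
    clear_value g
    have E1 : (cK + cK1) * (H 0 + H h) = γ*(H (xK - ξ) + H (xK + h - ξ)) - 2*lam := by
      linear_combination e1 + e2
    have E2 : (cK1 - cK) * (H 0 - H h) = γ*(H (xK + h - ξ) - H (xK - ξ)) := by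
      linear_combination e2 - e1
    have hgH0 : g * H 0 = (cK + cK1)*H 0 + lam := by
      rw [hgdef]; field_simp
    have II : (g - γ) * (H 0 * (H 0 + H h)) =
        γ*H 0*(H (xK - ξ) + H (xK + h - ξ) - H 0 - H h) + lam*(H h - H 0) := by
      linear_combination (H 0 + H h) * hgH0 + (H 0) * E1
    -- |g - γ| ≤ C1 h²
    have hBa := abs_le.1 (habs (xK - ξ) hma)
    have hBb := abs_le.1 (habs (xK + h - ξ) hmb)
    have hBh := abs_le.1 (habs h hmh)
    have hgbound : |g - γ| ≤ C1 * h^2 := by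
      have hstep : |g - γ| * (H 0 * (H 0 + H h)) ≤ (3*γ*H 0 + lam)*((-A)/2 + M)*h^2 := by
        have habs1 : |(g - γ) * (H 0 * (H 0 + H h))| = |g - γ| * (H 0 * (H 0 + H h)) := by
          rw [abs_mul, abs_of_pos (mul_pos hH0 (by linarith))]
        rw [← habs1, II]
        have t1 : |γ*H 0*(H (xK - ξ) + H (xK + h - ξ) - H 0 - H h) + lam*(H h - H 0)|
            ≤ γ*H 0*|H (xK - ξ) + H (xK + h - ξ) - H 0 - H h| + lam*|H h - H 0| := by
          refine (abs_add_le _ _).trans ?_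
          rw [abs_mul (γ*H 0), abs_mul lam, abs_of_pos (mul_pos hγ hH0), abs_of_pos hlam]
        refine t1.trans ?_
        have t2 : |H (xK - ξ) + H (xK + h - ξ) - H 0 - H h| ≤ 3*(((-A)/2 + M)*h^2) := by
          rw [abs_le]
          constructor <;> linarith [hBa.1, hBa.2, hBb.1, hBb.2, hBh.1, hBh.2]
        have t3 : |H h - H 0| ≤ ((-A)/2 + M)*h^2 := habs h hmh
        have u1 := mul_le_mul_of_nonneg_left t2 (le_of_lt (mul_pos hγ hH0))
        have u2 := mul_le_mul_of_nonneg_left t3 hlam.le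
        linarith only [u1, u2]
      have hc1 : C1 * h^2 * (H 0)^2 = (3*γ*H 0 + lam)*((-A)/2 + M)*h^2 := by
        rw [hC1def]; field_simp
      have hmono : |g - γ| * (H 0)^2 ≤ |g - γ| * (H 0 * (H 0 + H h)) := by
        apply mul_le_mul_of_nonneg_left _ (abs_nonneg _)
        linarith only [mul_nonneg hH0.le hHhnn]
      have : |g - γ| * (H 0)^2 ≤ C1 * h^2 * (H 0)^2 := by
        rw [hc1]; exact hmono.trans hstep
      exact le_of_mul_le_mul_right this (by positivity)
    obtain ⟨hgg1, hgg2⟩ := abs_le.1 hgbound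
    have hglb : γ/2 ≤ g := by linarith
    have hgub : g ≤ 3*γ/2 := by linarith
    have hgpos : 0 < g := by linarith
    have hgne : g ≠ 0 := ne_of_gt hgpos
    refine ⟨hgne, ?_⟩
    -- final bound
    have hTpos : 0 < 2*g*(H 0 - H h) := by positivity
    have e3 : (cK1 - cK) * ((xK + h) - xK) / (2 * g) =
        γ*(H (xK + h - ξ) - H (xK - ξ))*h / (2*g*(H 0 - H h)) := by
      rw [div_eq_div_iff (by positivity) (by positivity)]
      linear_combination (2*g*h) * E2
    have hEeq : (xK + (xK + h)) / 2 + (cK1 - cK) * ((xK + h) - xK) / (2 * g) - ξ =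
        (xK + h/2 - ξ) + γ*(H (xK + h - ξ) - H (xK - ξ))*h / (2*g*(H 0 - H h)) := by
      rw [e3]; ring
    have hET : ((xK + h/2 - ξ) + γ*(H (xK + h - ξ) - H (xK - ξ))*h / (2*g*(H 0 - H h)))
        * (2*g*(H 0 - H h)) =
        (xK + h/2 - ξ)*(2*g*(H 0 - H h)) + γ*(H (xK + h - ξ) - H (xK - ξ))*h := by
      rw [add_mul, div_mul_cancel₀ _ (ne_of_gt hTpos)]
    -- decomposition identity (pure ring)
    have hN : (xK + h/2 - ξ)*(2*g*(H 0 - H h)) + γ*(H (xK + h - ξ) - H (xK - ξ))*h =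
        (xK + h/2 - ξ)*(-A*h^2*(g - γ) - 2*g*(H h - H 0 - A/2*h^2))
        + γ*((H (xK + h - ξ) - H 0 - A/2*(xK + h - ξ)^2)
            - (H (xK - ξ) - H 0 - A/2*(xK - ξ)^2))*h := by
      ring
    -- bounds
    have hw : |xK + h/2 - ξ| ≤ h/2 := abs_le.2 ⟨by linarith, by linarith⟩
    have hRh' : |H h - H 0 - A/2*h^2| ≤ M*h^3 := tRy h hmh
    have hbr : |(-A*h^2*(g - γ) - 2*g*(H h - H 0 - A/2*h^2))| ≤
        (-A)*h^2*(C1*h^2) + 2*g*(M*h^3) := by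
      have b1 := abs_le.1 hgbound
      have b2 := abs_le.1 hRh'
      have p1 := mul_le_mul_of_nonneg_left b1.2 (show (0:ℝ) ≤ (-A)*h^2 by positivity)
      have p2 := mul_le_mul_of_nonneg_left b1.1 (show (0:ℝ) ≤ (-A)*h^2 by positivity)
      have q1 := mul_le_mul_of_nonneg_left b2.2 (show (0:ℝ) ≤ 2*g by linarith)
      have q2 := mul_le_mul_of_nonneg_left b2.1 (show (0:ℝ) ≤ 2*g by linarith)
      rw [abs_le]
      constructor <;> linarith only [p1, p2, q1, q2]
    rw [hEeq]
    have hEabs : |(xK + h/2 - ξ) + γ*(H (xK + h - ξ) - H (xK - ξ))*h / (2*g*(H 0 - H h))|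
        * (2*g*(H 0 - H h)) ≤ ((-A)*C1/2 + (5/2)*γ*M)*h^4 := by
      have c0 : |(xK + h/2 - ξ) + γ*(H (xK + h - ξ) - H (xK - ξ))*h / (2*g*(H 0 - H h))|
          * (2*g*(H 0 - H h)) =
          |((xK + h/2 - ξ) + γ*(H (xK + h - ξ) - H (xK - ξ))*h / (2*g*(H 0 - H h)))
          * (2*g*(H 0 - H h))| := by
        rw [abs_mul, abs_of_pos hTpos]
      have c1 : |((xK + h/2 - ξ) + γ*(H (xK + h - ξ) - H (xK - ξ))*h / (2*g*(H 0 - H h)))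
          * (2*g*(H 0 - H h))| =
          |(xK + h/2 - ξ)*(-A*h^2*(g - γ) - 2*g*(H h - H 0 - A/2*h^2))
          + γ*((H (xK + h - ξ) - H 0 - A/2*(xK + h - ξ)^2)
              - (H (xK - ξ) - H 0 - A/2*(xK - ξ)^2))*h| := by
        rw [hET, hN]
      rw [c0, c1]
      refine (abs_add_le _ _).trans ?_
      have w1 : |(xK + h/2 - ξ)*(-A*h^2*(g - γ) - 2*g*(H h - H 0 - A/2*h^2))| ≤
          (h/2)*((-A)*h^2*(C1*h^2) + 2*g*(M*h^3)) := by
        rw [abs_mul]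
        exact mul_le_mul hw hbr (abs_nonneg _) (by positivity)
      have w2 : |γ*((H (xK + h - ξ) - H 0 - A/2*(xK + h - ξ)^2)
          - (H (xK - ξ) - H 0 - A/2*(xK - ξ)^2))*h| ≤ γ*(M*h^3)*h := by
        rw [abs_mul, abs_mul, abs_of_pos hγ, abs_of_pos hh]
        have v1 := mul_le_mul_of_nonneg_right (mul_le_mul_of_nonneg_left tRab hγ.le) hh.le
        linarith only [v1]
      have e5 : h^4*h ≤ h^4 := by
        calc h^4*h ≤ h^4*1 := mul_le_mul_of_nonneg_left hh1 (pow_nonneg hh.le 4)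
          _ = h^4 := mul_one _
      have e5' := mul_le_mul_of_nonneg_left e5 (show (0:ℝ) ≤ (-A)*C1/2 by positivity)
      have gM : g*(M*h^4) ≤ (3*γ/2)*(M*h^4) := mul_le_mul_of_nonneg_right hgub (by positivity)
      linarith only [w1, w2, e5', gM]
    have t1 : γ*((-A)/4*h^2) ≤ 2*g*(H 0 - H h) :=
      mul_le_mul (by linarith) hDn1 (by positivity) (by linarith)
    have t2 : C*h^2*(γ*((-A)/4*h^2)) ≤ C*h^2*(2*g*(H 0 - H h)) :=
      mul_le_mul_of_nonneg_left t1 (by positivity)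
    have t3 : C*(γ*(-A)/4) = ((-A)*C1/2 + (5/2)*γ*M) + γ*(-A)/4 := by
      have hAne : A ≠ 0 := ne_of_lt hA
      rw [hCdef]; field_simp; ring
    have t4 : ((-A)*C1/2 + (5/2)*γ*M)*h^4 ≤ C*h^2*(γ*((-A)/4*h^2)) := by
      have t5 : C*(γ*(-A)/4)*h^4 = (((-A)*C1/2 + (5/2)*γ*M) + γ*(-A)/4)*h^4 := by rw [t3]
      have t6 : 0 ≤ γ*(-A)*h^4 :=
        mul_nonneg (le_of_lt (mul_pos hγ hα)) (pow_nonneg hh.le 4)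
      linarith only [t5, t6]
    have hfin : |(xK + h/2 - ξ) + γ*(H (xK + h - ξ) - H (xK - ξ))*h / (2*g*(H 0 - H h))|
        * (2*g*(H 0 - H h)) ≤ C*h^2 * (2*g*(H 0 - H h)) :=
      hEabs.trans (t4.trans t2)
    exact le_of_mul_le_mul_right hfin hTpos
end
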